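/- arXiv:1803.00008 — 4 statements merged into one kernel-verified Lean document; each statement's English description precedes it below -/
import Mathlib

section
/- Let m ≥ 1 be an integer and 0 < α ≤ 1 be such that m(1+α) is a positive integer. Let u₁ be the uniform distribution over m(1+α) elements, and let u₂ be the distribution over [m] ∪ {△} with u₂(i) = 1/(m(1+α)) for each i ∈ [m] and u₂(△) = α/(1+α). Then S_m(u₁) − S_m(u₂) ≥ mα·(1 − e^{−1/2}) − 1; in particular the support coverages of u₁ and u₂ differ by Ω(αm). -/
/-- Let `m ≥ 1` and `0 < α ≤ 1` with `M = m (1 + α)` a positive integer.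
For `u₁` uniform over `M` elements and `u₂` over `[m] ∪ {△}` with `u₂ i = 1/(m(1+α))` for
`i ∈ [m]` and `u₂ △ = α/(1+α)`, the support coverages satisfy
`S_m(u₁) - S_m(u₂) ≥ m α (1 - e^{-1/2}) - 1`; in particular they differ by `Ω(α m)`. -/
theorem stmt_4 (m : ℕ) (hm : 1 ≤ m) (α : ℝ) (hα : 0 < α) (hα1 : α ≤ 1)
    (M : ℕ) (hM : 0 < M) (hMval : (M : ℝ) = m * (1 + α))
    (u₁ : Fin M → ℝ) (hu₁ : ∀ i, u₁ i = 1 / (m * (1 + α)))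
    (u₂ : Fin (m + 1) → ℝ)
    (hu₂ : ∀ i : Fin (m + 1), u₂ i =
      if (i : ℕ) < m then 1 / (m * (1 + α)) else α / (1 + α)) :
    (∑ i : Fin M, (1 - (1 - u₁ i) ^ m)) - (∑ i : Fin (m + 1), (1 - (1 - u₂ i) ^ m)) ≥
      m * α * (1 - Real.exp (-(1 / 2))) - 1 := by
  have hm' : (0:ℝ) < m := by exact_mod_cast hm
  have h1α : (0:ℝ) < 1 + α := by linarith
  have hMpos : (0:ℝ) < M := by exact_mod_cast hM
  set x : ℝ := 1 / (m * (1 + α)) with hx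
  have hxM : x = 1 / M := by rw [hx, hMval]
  -- first sum
  have hs1 : (∑ i : Fin M, (1 - (1 - u₁ i) ^ m)) = M * (1 - (1 - x)^m) := by
    simp [hu₁, ← hx, Finset.sum_const, mul_comm]
    ring
  -- second sum
  have hs2 : (∑ i : Fin (m + 1), (1 - (1 - u₂ i) ^ m))
      = m * (1 - (1 - x)^m) + (1 - (1 - α/(1+α))^m) := by
    rw [Fin.sum_univ_castSucc]
    have h1 : ∀ i : Fin m, u₂ i.castSucc = x := by
      intro i; rw [hu₂]; simp [i.isLt]
    have h2 : u₂ (Fin.last m) = α/(1+α) := by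
      rw [hu₂]; simp
    simp [h1, h2, Finset.sum_const, mul_comm]
    ring
  rw [hs1, hs2]
  have key : (1 - x)^m ≤ Real.exp (-(1/2)) := by
    have hx0 : 0 < x := by
      rw [hxM]; positivity
    have hx1 : x ≤ 1 := by
      rw [hxM]
      rw [div_le_one hMpos]
      have : (1:ℝ) ≤ M := by exact_mod_cast hM
      linarith
    have h1 : (1 - x)^m ≤ Real.exp (-x) ^ m := by
      apply pow_le_pow_left₀ (by linarith)
      have := Real.add_one_le_exp (-x)
      linarith
    have h2 : Real.exp (-x) ^ m = Real.exp (-(m * x)) := by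
      rw [← Real.exp_nat_mul]; ring_nf
    have h3 : Real.exp (-(m * x)) ≤ Real.exp (-(1/2)) := by
      apply Real.exp_le_exp.mpr
      have hmx : m * x = 1 / (1 + α) := by
        rw [hx]; field_simp
      rw [hmx]
      have : (1:ℝ)/2 ≤ 1/(1+α) := by
        apply div_le_div_of_nonneg_left (by norm_num) h1α (by linarith)
      linarith
    calc (1 - x)^m ≤ Real.exp (-x) ^ m := h1
      _ = Real.exp (-(m * x)) := h2
      _ ≤ Real.exp (-(1/2)) := h3
  have hB : (0:ℝ) ≤ (1 - α/(1+α))^m := by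
    apply pow_nonneg
    have : α/(1+α) ≤ 1 := by
      rw [div_le_one h1α]; linarith
    linarith
  have h4 : (M:ℝ)*(1 - (1 - x)^m) - m*(1 - (1 - x)^m) = m*α*(1 - (1 - x)^m) := by
    rw [hMval]; ring
  have h5 := mul_le_mul_of_nonneg_left key (le_of_lt (mul_pos hm' hα))
  linarith
end

section
/- Let k ≥ 1 be an integer, let 0 < α < 3, and let p be a discrete distribution over a countable set such that every nonzero probability p(x) satisfies p(x) ≥ 1/k. If m ≥ k·ln(3/α), then S_m(p) ≤ S(p) and S(p) − S_m(p) = ∑_{x : p(x) > 0} (1 − p(x))^m ≤ k·α/3; in particular |S_m(p) − S(p)| ≤ αk/3. -/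
/-- Let `k ≥ 1`, `0 < α < 3`, and let `p` be a discrete distribution on a
countable set all of whose nonzero masses are at least `1/k`. If `m ≥ k ln (3/α)`, then
the support coverage `S_m(p) = ∑_x (1 - (1 - p x)^m)` satisfies `S_m(p) ≤ S(p)`,
`S(p) - S_m(p) = ∑_{x : p x > 0} (1 - p x)^m ≤ k α / 3`, and `|S_m(p) - S(p)| ≤ α k / 3`,
where `S(p)` is the support size of `p`. -/
theorem stmt_7 {X : Type*} [Countable X] (k : ℕ) (hk : 1 ≤ k) (α : ℝ) (hα : 0 < α)
    (hα3 : α < 3) (p : X → ℝ) (hnn : ∀ x, 0 ≤ p x) (hsum : ∑' x, p x = 1)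
    (hmin : ∀ x, p x ≠ 0 → 1 / (k : ℝ) ≤ p x)
    (m : ℕ) (hm : (k : ℝ) * Real.log (3 / α) ≤ m) :
    (∑' x : X, (1 - (1 - p x) ^ m)) ≤ ((Function.support p).ncard : ℝ) ∧
      ((Function.support p).ncard : ℝ) - (∑' x : X, (1 - (1 - p x) ^ m)) =
        ∑' x : X, Set.indicator {y | 0 < p y} (fun y => (1 - p y) ^ m) x ∧
      (∑' x : X, Set.indicator {y | 0 < p y} (fun y => (1 - p y) ^ m) x) ≤ k * α / 3 ∧
      |(∑' x : X, (1 - (1 - p x) ^ m)) - ((Function.support p).ncard : ℝ)| ≤ α * k / 3 := by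
  have hk0 : (0 : ℝ) < k := by exact_mod_cast hk
  have hsummable : Summable p := by
    by_contra h
    rw [tsum_eq_zero_of_not_summable h] at hsum
    norm_num at hsum
  have hfin : (Function.support p).Finite := by
    have h0 := hsummable.tendsto_cofinite_zero
    have hev : ∀ᶠ x in Filter.cofinite, p x < 1 / k :=
      h0.eventually_lt_const (by positivity)
    have hfin' : {x | ¬ p x < 1 / k}.Finite := Filter.eventually_cofinite.mp hev
    refine hfin'.subset ?_
    intro x hx
    exact not_lt.mpr (hmin x hx)
  set F := hfin.toFinset with hF
  have hmemF : ∀ x, x ∈ F ↔ p x ≠ 0 := by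
    intro x; rw [hF, Set.Finite.mem_toFinset, Function.mem_support]
  have hle1 : ∀ x, p x ≤ 1 := by
    intro x
    rw [← hsum]
    exact Summable.le_tsum hsummable x fun y _ => hnn y
  have hcard : (F.card : ℝ) ≤ k := by
    have h1 : F.card • ((1 : ℝ) / k) ≤ ∑ x ∈ F, p x :=
      Finset.card_nsmul_le_sum F p (1 / k) fun x hx => hmin x ((hmemF x).mp hx)
    have h2 : ∑ x ∈ F, p x ≤ 1 := by
      rw [← hsum]
      exact Summable.sum_le_tsum F (fun x _ => hnn x) hsummable
    have h3 : (F.card : ℝ) * (1 / k) ≤ 1 := by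
      calc (F.card : ℝ) * (1 / k) = F.card • ((1 : ℝ) / k) := by simp
        _ ≤ ∑ x ∈ F, p x := h1
        _ ≤ 1 := h2
    rwa [mul_one_div, div_le_one hk0] at h3
  have hkey : ∀ x, p x ≠ 0 → (1 - p x) ^ m ≤ α / 3 := by
    intro x hx
    have h1 : 1 / (k : ℝ) ≤ p x := hmin x hx
    have h2 : (0 : ℝ) ≤ 1 - p x := by linarith [hle1 x]
    have h3 : 1 - p x ≤ Real.exp (-p x) := by
      have := Real.add_one_le_exp (-p x); linarith
    calc (1 - p x) ^ m ≤ (Real.exp (-p x)) ^ m := pow_le_pow_left₀ h2 h3 m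
      _ = Real.exp (m * (-p x)) := by rw [← Real.exp_nat_mul]
      _ ≤ Real.exp (-((m : ℝ) / k)) := by
          apply Real.exp_le_exp.mpr
          have : (m : ℝ) / k ≤ (m : ℝ) * p x := by
            rw [div_le_iff₀ hk0]
            calc (m : ℝ) = m * (k * (1/k)) := by field_simp
              _ ≤ m * (k * p x) := by
                  apply mul_le_mul_of_nonneg_left _ (Nat.cast_nonneg m)
                  exact mul_le_mul_of_nonneg_left h1 hk0.le
              _ = m * p x * k := by ring
          linarith
      _ ≤ α / 3 := by
          rw [← Real.exp_log (show (0:ℝ) < α / 3 by positivity)]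
          apply Real.exp_le_exp.mpr
          have hlog : Real.log (α / 3) = - Real.log (3 / α) := by
            rw [Real.log_div hα.ne' (by norm_num), Real.log_div (by norm_num) hα.ne']
            ring
          rw [hlog, neg_le_neg_iff, le_div_iff₀ hk0]
          linarith [hm]
  have ht_nonneg : ∀ x, p x ≠ 0 → (0 : ℝ) ≤ (1 - p x) ^ m := by
    intro x hx
    exact pow_nonneg (by linarith [hle1 x]) m
  have htsum1 : (∑' x : X, (1 - (1 - p x) ^ m)) = ∑ x ∈ F, (1 - (1 - p x) ^ m) := by
    apply tsum_eq_sum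
    intro x hx
    have hx0 : p x = 0 := by
      by_contra h; exact hx ((hmemF x).mpr h)
    simp [hx0]
  have hsetS : {y : X | 0 < p y} = Function.support p := by
    ext y
    simp only [Set.mem_setOf_eq, Function.mem_support]
    constructor
    · exact fun h => h.ne'
    · exact fun h => (hnn y).lt_of_ne (Ne.symm h)
  have htsum2 : (∑' x : X, Set.indicator {y | 0 < p y} (fun y => (1 - p y) ^ m) x)
      = ∑ x ∈ F, (1 - p x) ^ m := by
    rw [tsum_eq_sum (s := F)]
    · apply Finset.sum_congr rfl
      intro x hx
      apply Set.indicator_of_mem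
      rw [hsetS, Function.mem_support]
      exact (hmemF x).mp hx
    · intro x hx
      apply Set.indicator_of_notMem
      rw [hsetS, Function.mem_support]
      intro h
      exact hx ((hmemF x).mpr h)
  have hncard : ((Function.support p).ncard : ℝ) = (F.card : ℝ) := by
    rw [Set.ncard_eq_toFinset_card _ hfin]
  have hsumt : ∑ x ∈ F, (1 - p x) ^ m ≤ (k : ℝ) * α / 3 := by
    have h1 : ∑ x ∈ F, (1 - p x) ^ m ≤ F.card • (α / 3) :=
      Finset.sum_le_card_nsmul F _ (α / 3) fun x hx => hkey x ((hmemF x).mp hx)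
    have h2 : (F.card : ℝ) * (α / 3) ≤ k * (α / 3) :=
      mul_le_mul_of_nonneg_right hcard (by positivity)
    calc ∑ x ∈ F, (1 - p x) ^ m ≤ (F.card : ℝ) * (α / 3) := by simpa using h1
      _ ≤ k * (α / 3) := h2
      _ = k * α / 3 := by ring
  have hsumt_nonneg : (0 : ℝ) ≤ ∑ x ∈ F, (1 - p x) ^ m :=
    Finset.sum_nonneg fun x hx => ht_nonneg x ((hmemF x).mp hx)
  have heq : (F.card : ℝ) - ∑ x ∈ F, (1 - (1 - p x) ^ m) = ∑ x ∈ F, (1 - p x) ^ m := by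
    rw [Finset.sum_sub_distrib]
    simp
  refine ⟨?_, ?_, ?_, ?_⟩
  · rw [htsum1, hncard]; linarith [heq, hsumt_nonneg]
  · rw [htsum1, htsum2, hncard]; exact heq
  · rw [htsum2]; exact hsumt
  · rw [htsum1, hncard, abs_sub_comm, abs_of_nonneg (by linarith [heq, hsumt_nonneg])]
    have : α * k / 3 = (k:ℝ) * α / 3 := by ring
    rw [this]; linarith [heq, hsumt]
end

section
/- Let n ≥ 3 and let x, y ∈ [k]^n be two sample sequences that differ in at most one coordinate. Then |H(p̂_x) − H(p̂_y)| ≤ 2·(ln n)/n; that is, the sensitivity of the empirical entropy estimator on n samples is at most 2(ln n)/n. -/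
lemma log_ge_one' {n : ℕ} (hn : 3 ≤ n) : 1 ≤ Real.log n := by
  have hn0 : (0:ℝ) < n := by exact_mod_cast Nat.lt_of_lt_of_le (by norm_num) hn
  rw [Real.le_log_iff_exp_le hn0]
  have h3 : Real.exp 1 ≤ 3 := by
    have := Real.exp_one_lt_d9; linarith
  have : (3:ℝ) ≤ n := by exact_mod_cast hn
  linarith

lemma step' (n m : ℕ) (hn : 3 ≤ n) (hm : m + 1 ≤ n) :
    |Real.negMulLog (((m:ℝ)+1)/n) - Real.negMulLog ((m:ℝ)/n)| ≤ Real.log n / n := by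
  have hn0 : (0:ℝ) < n := by exact_mod_cast Nat.lt_of_lt_of_le (by norm_num) hn
  have hln : 1 ≤ Real.log n := log_ge_one' hn
  rcases Nat.eq_zero_or_pos m with rfl | hm1
  · simp only [Nat.cast_zero, zero_add, zero_div, Real.negMulLog_zero, sub_zero]
    have h : Real.negMulLog (1/(n:ℝ)) = Real.log n / n := by
      rw [Real.negMulLog, one_div, Real.log_inv]
      field_simp
    rw [h, abs_of_nonneg (by positivity)]
  · set a : ℝ := (m:ℝ)/n with ha'
    set b : ℝ := ((m:ℝ)+1)/n with hb'
    have hm0 : (0:ℝ) < m := by exact_mod_cast hm1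
    have ha : 0 < a := by positivity
    have hb : 0 < b := by positivity
    have hab : a ≤ b := by rw [ha', hb']; gcongr; linarith
    have hsub : b - a = 1/n := by rw [ha', hb', div_sub_div_same]; ring_nf
    have hb1 : b ≤ 1 := by
      rw [hb', div_le_one hn0]
      exact_mod_cast hm
    have hbn : 1/(n:ℝ) ≤ b := by
      rw [hb']; gcongr; linarith
    have hlogb_le : Real.log b ≤ 0 := Real.log_nonpos hb.le hb1
    have hlogb_ge : -Real.log n ≤ Real.log b := by
      have := Real.log_le_log (by positivity) hbn
      rwa [one_div, Real.log_inv] at this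
    have hlog_mono : Real.log a ≤ Real.log b := Real.log_le_log ha hab
    have hlogdiff : Real.log b - Real.log a ≤ (b-a)/a := by
      have h1 := Real.log_le_sub_one_of_pos (div_pos hb ha)
      rw [Real.log_div hb.ne' ha.ne'] at h1
      have : b/a - 1 = (b-a)/a := by field_simp
      linarith
    have hid : a*Real.log a - b*Real.log b
        = -(a*(Real.log b - Real.log a)) - (b-a)*Real.log b := by ring
    have p1 : 0 ≤ a*(Real.log b - Real.log a) :=
      mul_nonneg ha.le (sub_nonneg.mpr hlog_mono)
    have p2 : (b-a)*(-Real.log n) ≤ (b-a)*Real.log b :=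
      mul_le_mul_of_nonneg_left hlogb_ge (by linarith)
    have q1 : a*((Real.log b - Real.log a)) ≤ b - a := by
      have h2 : a*((b-a)/a) = b - a := by field_simp
      have := mul_le_mul_of_nonneg_left hlogdiff ha.le
      linarith
    have q2 : (b-a)*Real.log b ≤ 0 := mul_nonpos_of_nonneg_of_nonpos (by linarith) hlogb_le
    have hr : 1/(n:ℝ) ≤ Real.log n / n := by gcongr
    have hkey : (b-a)*Real.log n = Real.log n / n := by rw [hsub]; ring
    rw [Real.negMulLog, Real.negMulLog, abs_le]
    constructor
    · linarith
    · linarith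

/-- The empirical entropy of a sample sequence `x ∈ [k]^n`:
`H(p̂_x) = ∑_a negMulLog (N_a / n)` where `N_a = |{i : x i = a}|`
(recall `Real.negMulLog t = -t * ln t`, with `negMulLog 0 = 0`). -/
noncomputable def empEntropy {k n : ℕ} (x : Fin n → Fin k) : ℝ :=
  ∑ a : Fin k, Real.negMulLog (((Finset.univ.filter (fun j => x j = a)).card : ℝ) / n)

/-- for `n ≥ 3` and sample sequences `x, y ∈ [k]^n` that differ in at most
one coordinate, `|H(p̂_x) - H(p̂_y)| ≤ 2 (ln n) / n`: the sensitivity of the empirical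
entropy estimator on `n` samples is at most `2 (ln n) / n`. -/
theorem stmt_10 (k n : ℕ) (hn : 3 ≤ n) (x y : Fin n → Fin k)
    (hham : (Finset.univ.filter (fun j => x j ≠ y j)).card ≤ 1) :
    |empEntropy x - empEntropy y| ≤ 2 * Real.log n / n := by
  have hn0 : (0:ℝ) < n := by exact_mod_cast Nat.lt_of_lt_of_le (by norm_num) hn
  have hln : 1 ≤ Real.log n := log_ge_one' hn
  have hpos : 0 ≤ Real.log n / n := by positivity
  set cx : Fin k → ℕ := fun a => (Finset.univ.filter (fun j => x j = a)).card with hcx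
  set cy : Fin k → ℕ := fun a => (Finset.univ.filter (fun j => y j = a)).card with hcy
  rcases Nat.le_one_iff_eq_zero_or_eq_one.mp hham with h0 | h1
  · have hxy : x = y := by
      funext j
      by_contra hj
      have hjmem : j ∈ Finset.univ.filter (fun j => x j ≠ y j) := by
        simp [hj]
      rw [Finset.card_eq_zero.mp h0] at hjmem
      exact absurd hjmem (Finset.notMem_empty j)
    rw [hxy, sub_self, abs_zero]
    positivity
  · obtain ⟨i, hi⟩ := Finset.card_eq_one.mp h1
    have hxi : x i ≠ y i := by
      have : i ∈ Finset.univ.filter (fun j => x j ≠ y j) := by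
        rw [hi]; exact Finset.mem_singleton_self i
      simpa using this
    have hj : ∀ j, j ≠ i → x j = y j := by
      intro j hne
      by_contra hc
      have : j ∈ Finset.univ.filter (fun j => x j ≠ y j) := by simp [hc]
      rw [hi] at this
      exact hne (Finset.mem_singleton.mp this)
    have heq : ∀ a, a ≠ x i → a ≠ y i → cx a = cy a := by
      intro a hax hay
      show (Finset.univ.filter (fun j => x j = a)).card
          = (Finset.univ.filter (fun j => y j = a)).card
      apply congrArg Finset.card
      ext j
      simp only [Finset.mem_filter, Finset.mem_univ, true_and]
      constructor
      · intro h
        have hji : j ≠ i := by rintro rfl; exact hax h.symm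
        rw [← hj j hji]; exact h
      · intro h
        have hji : j ≠ i := by rintro rfl; exact hay h.symm
        rw [hj j hji]; exact h
    have h1x : cx (x i) = cy (x i) + 1 := by
      have hset : Finset.univ.filter (fun j => x j = x i)
          = insert i (Finset.univ.filter (fun j => y j = x i)) := by
        ext j
        simp only [Finset.mem_filter, Finset.mem_univ, true_and, Finset.mem_insert]
        constructor
        · intro h
          by_cases hji : j = i
          · exact Or.inl hji
          · exact Or.inr (by rw [← hj j hji]; exact h)
        · rintro (rfl | h)
          · rfl
          · have hji : j ≠ i := by rintro rfl; exact hxi h.symm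
            rw [hj j hji]; exact h
      have hnotmem : i ∉ Finset.univ.filter (fun j => y j = x i) := by
        simp only [Finset.mem_filter, Finset.mem_univ, true_and]
        exact fun h => hxi h.symm
      show (Finset.univ.filter (fun j => x j = x i)).card
          = (Finset.univ.filter (fun j => y j = x i)).card + 1
      rw [hset, Finset.card_insert_of_notMem hnotmem]
    have h1y : cy (y i) = cx (y i) + 1 := by
      have hset : Finset.univ.filter (fun j => y j = y i)
          = insert i (Finset.univ.filter (fun j => x j = y i)) := by
        ext j
        simp only [Finset.mem_filter, Finset.mem_univ, true_and, Finset.mem_insert]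
        constructor
        · intro h
          by_cases hji : j = i
          · exact Or.inl hji
          · exact Or.inr (by rw [hj j hji]; exact h)
        · rintro (rfl | h)
          · rfl
          · have hji : j ≠ i := by rintro rfl; exact hxi h
            rw [← hj j hji]; exact h
      have hnotmem : i ∉ Finset.univ.filter (fun j => x j = y i) := by
        simp only [Finset.mem_filter, Finset.mem_univ, true_and]
        exact hxi
      show (Finset.univ.filter (fun j => y j = y i)).card
          = (Finset.univ.filter (fun j => x j = y i)).card + 1
      rw [hset, Finset.card_insert_of_notMem hnotmem]
    have hle : ∀ a, cx a ≤ n := by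
      intro a
      calc cx a ≤ Finset.univ.card := Finset.card_filter_le _ _
        _ = n := by simp
    have hley : ∀ a, cy a ≤ n := by
      intro a
      calc cy a ≤ Finset.univ.card := Finset.card_filter_le _ _
        _ = n := by simp
    -- rewrite difference as a sum over the pair {x i, y i}
    set g : Fin k → ℝ := fun a =>
      Real.negMulLog ((cx a : ℝ)/n) - Real.negMulLog ((cy a : ℝ)/n) with hg
    have hdiff : empEntropy x - empEntropy y = ∑ a : Fin k, g a := by
      rw [empEntropy, empEntropy, ← Finset.sum_sub_distrib]
    have hzero : ∀ a ∈ Finset.univ, a ∉ ({x i, y i} : Finset (Fin k)) → g a = 0 := by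
      intro a _ ha
      simp only [Finset.mem_insert, Finset.mem_singleton, not_or] at ha
      rw [hg]; simp only
      rw [heq a ha.1 ha.2, sub_self]
    have hsum : ∑ a : Fin k, g a = g (x i) + g (y i) := by
      rw [← Finset.sum_subset (Finset.subset_univ ({x i, y i} : Finset (Fin k))) hzero,
        Finset.sum_pair hxi]
    have hb1 : |g (x i)| ≤ Real.log n / n := by
      rw [hg]; simp only
      rw [h1x]
      have h1 : ((cy (x i) + 1 : ℕ) : ℝ) = (cy (x i) : ℝ) + 1 := by push_cast; ring
      rw [h1]
      exact step' n (cy (x i)) hn (by have := hle (x i); omega)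
    have hb2 : |g (y i)| ≤ Real.log n / n := by
      rw [hg]; simp only
      rw [h1y, abs_sub_comm]
      have h1 : ((cx (y i) + 1 : ℕ) : ℝ) = (cx (y i) : ℝ) + 1 := by push_cast; ring
      rw [h1]
      exact step' n (cx (y i)) hn (by have := hley (y i); omega)
    calc |empEntropy x - empEntropy y| = |g (x i) + g (y i)| := by rw [hdiff, hsum]
      _ ≤ |g (x i)| + |g (y i)| := abs_add_le _ _
      _ ≤ Real.log n / n + Real.log n / n := add_le_add hb1 hb2
      _ = 2 * Real.log n / n := by ring
end

section
/- Let p be a distribution on the finite set [k], let X₁,…,Xₙ be i.i.d. samples from p, and let p̂ₙ be the empirical distribution. Then 0 ≤ H(p) − E[H(p̂ₙ)] ≤ k/n; that is, the bias of the empirical entropy estimator is at most k/n. -/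
open Finset

/-- The empirical distribution of a sample sequence `x ∈ [k]^n`. -/
noncomputable def empDist {k n : ℕ} (x : Fin n → Fin k) : Fin k → ℝ :=
  fun a => ((Finset.univ.filter (fun j => x j = a)).card : ℝ) / n

/-- Shannon entropy of a distribution on `[k]` (natural log, `0 ln 0 = 0`). -/
noncomputable def shEntropy {k : ℕ} (q : Fin k → ℝ) : ℝ :=
  ∑ a : Fin k, Real.negMulLog (q a)

/-- Expectation of `f` under `n` i.i.d. samples from `p`. -/
noncomputable def iidExp {k : ℕ} (p : Fin k → ℝ) (n : ℕ) (f : (Fin n → Fin k) → ℝ) : ℝ :=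
  ∑ x : Fin n → Fin k, (∏ j, p (x j)) * f x


section Aux

variable {k n : ℕ}

lemma iid_prod (p : Fin k → ℝ) (f : Fin n → Fin k → ℝ) :
    ∑ x : Fin n → Fin k, ∏ i, (p (x i) * f i (x i)) = ∏ i, ∑ a, p a * f i a := by
  rw [Finset.prod_univ_sum, Fintype.piFinset_univ]

lemma prod_two {β : Type*} [CommMonoid β] {j j' : Fin n} (h : j ≠ j') (f : Fin n → β)
    (hf : ∀ i, i ≠ j → i ≠ j' → f i = 1) : ∏ i, f i = f j * f j' := by
  rw [← Finset.prod_pair h]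
  refine (Finset.prod_subset (Finset.subset_univ _) ?_).symm
  intro i _ hi
  simp only [Finset.mem_insert, Finset.mem_singleton, not_or] at hi
  exact hf i hi.1 hi.2

lemma marg_one {p : Fin k → ℝ} (hsum : ∑ a, p a = 1) (j : Fin n) (g : Fin k → ℝ) :
    ∑ x : Fin n → Fin k, (∏ i, p (x i)) * g (x j) = ∑ a, p a * g a := by
  have key := iid_prod p (fun i b => if i = j then g b else 1)
  beta_reduce at key
  have h1 : ∀ x : Fin n → Fin k, (∏ i, p (x i)) * g (x j)
      = ∏ i, (p (x i) * if i = j then g (x i) else 1) := by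
    intro x
    rw [Finset.prod_mul_distrib]
    congr 1
    rw [Finset.prod_ite_eq' Finset.univ j (fun i => g (x i))]
    simp
  simp_rw [h1]
  rw [key]
  have h2 : ∀ i : Fin n, (∑ a, p a * (if i = j then g a else 1))
      = if i = j then ∑ a, p a * g a else 1 := by
    intro i
    by_cases hij : i = j <;> simp [hij, hsum]
  simp_rw [h2]
  rw [Finset.prod_ite_eq' Finset.univ j (fun _ => ∑ a, p a * g a)]
  simp

lemma marg_two {p : Fin k → ℝ} (hsum : ∑ a, p a = 1) {j j' : Fin n} (hjj : j ≠ j')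
    (g h : Fin k → ℝ) :
    ∑ x : Fin n → Fin k, (∏ i, p (x i)) * (g (x j) * h (x j'))
      = (∑ a, p a * g a) * (∑ a, p a * h a) := by
  have key := iid_prod p (fun i b => if i = j then g b else if i = j' then h b else 1)
  beta_reduce at key
  have h1 : ∀ x : Fin n → Fin k, (∏ i, p (x i)) * (g (x j) * h (x j'))
      = ∏ i, (p (x i) * if i = j then g (x i) else if i = j' then h (x i) else 1) := by
    intro x
    rw [Finset.prod_mul_distrib]
    congr 1
    rw [prod_two hjj]
    · simp [hjj, Ne.symm hjj]
    · intro i hi hi'; simp [hi, hi']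
  simp_rw [h1]
  rw [key]
  have h2 : ∀ i : Fin n, (∑ a, p a * (if i = j then g a else if i = j' then h a else 1))
      = if i = j then ∑ a, p a * g a else if i = j' then ∑ a, p a * h a else 1 := by
    intro i
    by_cases hij : i = j
    · simp [hij]
    · by_cases hij' : i = j' <;> simp [hij, hij', hsum]
  simp_rw [h2]
  rw [prod_two hjj]
  · simp [hjj, Ne.symm hjj]
  · intro i hi hi'; simp [hi, hi']

lemma empDist_eq (x : Fin n → Fin k) (a : Fin k) :
    empDist x a = (∑ j, if x j = a then (1:ℝ) else 0) / n := by
  unfold empDist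
  congr 1
  rw [Finset.card_filter]
  push_cast
  rfl

lemma moment_one {p : Fin k → ℝ} (hn : 0 < n) (hsum : ∑ a, p a = 1) (a : Fin k) :
    ∑ x : Fin n → Fin k, (∏ i, p (x i)) * empDist x a = p a := by
  have hn' : (0:ℝ) < n := by exact_mod_cast hn
  have step1 : ∀ x : Fin n → Fin k, (∏ i, p (x i)) * empDist x a
      = (∑ j, (∏ i, p (x i)) * (if x j = a then (1:ℝ) else 0)) / n := by
    intro x
    rw [empDist_eq, ← mul_div_assoc, Finset.mul_sum]
  simp_rw [step1]
  rw [← Finset.sum_div, Finset.sum_comm]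
  have step2 : ∀ j : Fin n, ∑ x : Fin n → Fin k,
      (∏ i, p (x i)) * (if x j = a then (1:ℝ) else 0) = p a := by
    intro j
    rw [marg_one hsum j (fun b => if b = a then (1:ℝ) else 0)]
    simp [mul_ite]
  simp_rw [step2]
  rw [Finset.sum_const]
  simp [mul_comm]
  field_simp

lemma moment_two {p : Fin k → ℝ} (hn : 0 < n) (hsum : ∑ a, p a = 1) (a : Fin k) :
    ∑ x : Fin n → Fin k, (∏ i, p (x i)) * (empDist x a)^2
      = (p a + ((n:ℝ) - 1) * (p a)^2) / n := by
  have hn' : (0:ℝ) < n := by exact_mod_cast hn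
  have step1 : ∀ x : Fin n → Fin k, (∏ i, p (x i)) * (empDist x a)^2
      = (∑ j, ∑ j', (∏ i, p (x i))
          * ((if x j = a then (1:ℝ) else 0) * (if x j' = a then (1:ℝ) else 0))) / (n:ℝ)^2 := by
    intro x
    rw [empDist_eq, div_pow, ← mul_div_assoc, sq, Finset.sum_mul_sum]
    simp_rw [Finset.mul_sum]
  simp_rw [step1]
  rw [← Finset.sum_div, Finset.sum_comm]
  have step2 : ∀ j : Fin n, ∑ x : Fin n → Fin k, ∑ j' : Fin n, (∏ i, p (x i))
      * ((if x j = a then (1:ℝ) else 0) * (if x j' = a then (1:ℝ) else 0))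
      = p a + ((n:ℝ) - 1) * (p a)^2 := by
    intro j
    rw [Finset.sum_comm]
    have hT : ∀ j' : Fin n, ∑ x : Fin n → Fin k, (∏ i, p (x i))
        * ((if x j = a then (1:ℝ) else 0) * (if x j' = a then (1:ℝ) else 0))
        = if j' = j then p a else (p a)^2 := by
      intro j'
      by_cases hjj : j' = j
      · subst hjj
        have : ∀ x : Fin n → Fin k, (∏ i, p (x i))
            * ((if x j' = a then (1:ℝ) else 0) * (if x j' = a then (1:ℝ) else 0))
            = (∏ i, p (x i)) * (if x j' = a then (1:ℝ) else 0) := by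
          intro x; by_cases hx : x j' = a <;> simp [hx]
        simp_rw [this]
        rw [marg_one hsum j' (fun b => if b = a then (1:ℝ) else 0)]
        simp [mul_ite]
      · rw [marg_two hsum (fun h => hjj h.symm) (fun b => if b = a then (1:ℝ) else 0)
          (fun b => if b = a then (1:ℝ) else 0)]
        simp [mul_ite, hjj, sq]
    simp_rw [hT]
    have hsplit : ∀ j' : Fin n, (if j' = j then p a else (p a)^2)
        = (p a)^2 + (if j' = j then p a - (p a)^2 else 0) := by
      intro j'; split <;> ring
    simp_rw [hsplit]
    rw [Finset.sum_add_distrib, Finset.sum_const,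
      Finset.sum_ite_eq' Finset.univ j (fun _ => p a - (p a)^2)]
    simp [nsmul_eq_mul]
    ring
  simp_rw [step2]
  rw [Finset.sum_const]
  simp
  field_simp

lemma ptwise {q t : ℝ} (hq : 0 < q) (ht : 0 ≤ t) :
    Real.negMulLog q - Real.negMulLog t ≤ t^2/q - t + (t - q) * Real.log q := by
  rcases eq_or_lt_of_le ht with h0 | ht'
  · simp [Real.negMulLog, ← h0]
  · have h1 : Real.log (t/q) ≤ t/q - 1 := Real.log_le_sub_one_of_pos (div_pos ht' hq)
    rw [Real.log_div ht'.ne' hq.ne'] at h1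
    have h2 : t * (Real.log t - Real.log q) ≤ t * (t/q - 1) :=
      mul_le_mul_of_nonneg_left h1 ht
    have h3 : t * (t/q - 1) = t^2/q - t := by field_simp
    simp only [Real.negMulLog]
    nlinarith [h2, h3]

lemma sum_w {p : Fin k → ℝ} (hsum : ∑ a, p a = 1) :
    ∑ x : Fin n → Fin k, ∏ j, p (x j) = 1 := by
  have key := iid_prod p (fun (_ : Fin n) (_ : Fin k) => (1:ℝ))
  simpa [hsum] using key

lemma empDist_nonneg (x : Fin n → Fin k) (a : Fin k) : 0 ≤ empDist x a :=
  div_nonneg (Nat.cast_nonneg _) (Nat.cast_nonneg _)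

lemma jensen_step {p : Fin k → ℝ} (hn : 0 < n) (hnn : ∀ a, 0 ≤ p a)
    (hsum : ∑ a, p a = 1) (a : Fin k) :
    ∑ x : Fin n → Fin k, (∏ j, p (x j)) * Real.negMulLog (empDist x a)
      ≤ Real.negMulLog (p a) := by
  have h := Real.concaveOn_negMulLog.le_map_sum
    (t := Finset.univ) (w := fun x : Fin n → Fin k => ∏ j, p (x j))
    (p := fun x => empDist x a)
    (fun x _ => Finset.prod_nonneg (fun i _ => hnn _)) (sum_w hsum)
    (fun x _ => empDist_nonneg x a)
  simp only [smul_eq_mul] at h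
  rwa [moment_one hn hsum a] at h

end Aux

/-- for a distribution `p` on `[k]` and `n` i.i.d. samples with empirical
distribution `p̂ₙ`, `0 ≤ H(p) - E[H(p̂ₙ)] ≤ k / n`: the bias of the empirical entropy
estimator is at most `k / n`. -/
theorem stmt_14 (k n : ℕ) (hn : 0 < n) (p : Fin k → ℝ)
    (hnn : ∀ a, 0 ≤ p a) (hsum : ∑ a, p a = 1) :
    0 ≤ shEntropy p - iidExp p n (fun x => shEntropy (empDist x)) ∧
      shEntropy p - iidExp p n (fun x => shEntropy (empDist x)) ≤ (k : ℝ) / n := by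
  have hn' : (0:ℝ) < n := by exact_mod_cast hn
  have hw0 : ∀ x : Fin n → Fin k, 0 ≤ ∏ j, p (x j) :=
    fun x => Finset.prod_nonneg (fun i _ => hnn _)
  have hswap : iidExp p n (fun x => shEntropy (empDist x))
      = ∑ a : Fin k, ∑ x : Fin n → Fin k, (∏ j, p (x j)) * Real.negMulLog (empDist x a) := by
    unfold iidExp shEntropy
    simp_rw [Finset.mul_sum]
    rw [Finset.sum_comm]
  have hdiff : shEntropy p - iidExp p n (fun x => shEntropy (empDist x))
      = ∑ a : Fin k, (Real.negMulLog (p a)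
          - ∑ x : Fin n → Fin k, (∏ j, p (x j)) * Real.negMulLog (empDist x a)) := by
    rw [hswap]
    unfold shEntropy
    rw [← Finset.sum_sub_distrib]
  have hbound : ∀ a : Fin k, Real.negMulLog (p a)
      - (∑ x : Fin n → Fin k, (∏ j, p (x j)) * Real.negMulLog (empDist x a)) ≤ 1/(n:ℝ) := by
    intro a
    rcases eq_or_lt_of_le (hnn a) with hq0 | hq
    · have hzero : ∑ x : Fin n → Fin k, (∏ j, p (x j)) * Real.negMulLog (empDist x a) = 0 := by
        apply Finset.sum_eq_zero
        intro x _
        by_cases hx : empDist x a = 0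
        · simp [hx]
        · have hcard : (Finset.univ.filter (fun j => x j = a)).card ≠ 0 := by
            intro h
            apply hx
            unfold empDist
            rw [h]
            simp
          obtain ⟨j, hj⟩ := Finset.card_pos.mp (Nat.pos_of_ne_zero hcard)
          rw [Finset.mem_filter] at hj
          have : ∏ j, p (x j) = 0 :=
            Finset.prod_eq_zero (Finset.mem_univ j) (by rw [hj.2, ← hq0])
          rw [this, zero_mul]
      rw [hzero, ← hq0]
      simp [Real.negMulLog_zero]
    · have key : Real.negMulLog (p a)
          - (∑ x : Fin n → Fin k, (∏ j, p (x j)) * Real.negMulLog (empDist x a))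
          = ∑ x : Fin n → Fin k, (∏ j, p (x j))
              * (Real.negMulLog (p a) - Real.negMulLog (empDist x a)) := by
        simp_rw [mul_sub]
        rw [Finset.sum_sub_distrib, ← Finset.sum_mul, sum_w hsum, one_mul]
      rw [key]
      have step : ∑ x : Fin n → Fin k, (∏ j, p (x j))
            * (Real.negMulLog (p a) - Real.negMulLog (empDist x a))
          ≤ ∑ x : Fin n → Fin k, (((∏ j, p (x j)) * (empDist x a)^2)/(p a)
              - (∏ j, p (x j)) * empDist x a
              + ((∏ j, p (x j)) * empDist x a - (∏ j, p (x j)) * p a) * Real.log (p a)) := by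
        apply Finset.sum_le_sum
        intro x _
        calc (∏ j, p (x j)) * (Real.negMulLog (p a) - Real.negMulLog (empDist x a))
            ≤ (∏ j, p (x j)) * ((empDist x a)^2/(p a) - empDist x a
                + (empDist x a - p a) * Real.log (p a)) :=
              mul_le_mul_of_nonneg_left (ptwise hq (empDist_nonneg x a)) (hw0 x)
          _ = _ := by ring
      have comp : ∑ x : Fin n → Fin k, (((∏ j, p (x j)) * (empDist x a)^2)/(p a)
              - (∏ j, p (x j)) * empDist x a
              + ((∏ j, p (x j)) * empDist x a - (∏ j, p (x j)) * p a) * Real.log (p a))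
          = (1 - p a)/(n:ℝ) := by
        rw [Finset.sum_add_distrib, Finset.sum_sub_distrib, ← Finset.sum_div,
          moment_two hn hsum a, moment_one hn hsum a, ← Finset.sum_mul,
          Finset.sum_sub_distrib, moment_one hn hsum a, ← Finset.sum_mul, sum_w hsum,
          one_mul, sub_self, zero_mul, add_zero]
        field_simp
        ring
      refine le_trans (le_trans step (le_of_eq comp)) ?_
      gcongr
      linarith [hnn a]
  constructor
  · rw [hdiff]
    exact Finset.sum_nonneg (fun a _ => sub_nonneg.mpr (jensen_step hn hnn hsum a))
  · rw [hdiff]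
    calc ∑ a : Fin k, (Real.negMulLog (p a)
          - ∑ x : Fin n → Fin k, (∏ j, p (x j)) * Real.negMulLog (empDist x a))
        ≤ ∑ _a : Fin k, 1/(n:ℝ) := Finset.sum_le_sum (fun a _ => hbound a)
      _ = (k : ℝ) / n := by
          rw [Finset.sum_const, Finset.card_univ, Fintype.card_fin, nsmul_eq_mul,
            mul_one_div]
end
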